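/- Let l ≥ 5 and let C_l be the cycle graph on vertices c_0, c_1, …, c_{l−1}. Apply the X measurement at c_0 with chosen neighbour c_{l−1}. The resulting graph has vertex set {c_1, …, c_{l−1}} and its edges are exactly: c_i–c_{i+1} for 1 ≤ i ≤ l−3, together with c_1–c_{l−2} and c_1–c_{l−1}. In other words, the result is a cycle of length l−2 on c_1, …, c_{l−2} together with the pendant vertex c_{l−1} attached to c_1. -/

import Mathlib

/-- A finite simple graph with an explicit vertex set inside an ambient type `α`. -/
structure FGraph (α : Type*) where
  verts : Set α
  Adj : α → α → Prop
  symm : ∀ {a b}, Adj a b → Adj b a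
  loopless : ∀ a, ¬ Adj a a
  edge_mem : ∀ {a b}, Adj a b → a ∈ verts ∧ b ∈ verts

namespace FGraph

variable {α : Type*}

/-- Local complementation at `v`: two distinct vertices are adjacent iff exactly one of
(adjacent in `G`) or (both neighbours of `v` in `G`) holds. -/
def LC (G : FGraph α) (v : α) : FGraph α where
  verts := G.verts
  Adj a b := a ≠ b ∧ Xor' (G.Adj a b) (G.Adj v a ∧ G.Adj v b)
  symm := by
    rintro a b ⟨hne, h⟩
    refine ⟨hne.symm, ?_⟩
    rcases h with ⟨h1, h2⟩ | ⟨h1, h2⟩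
    · exact Or.inl ⟨G.symm h1, fun hx => h2 ⟨hx.2, hx.1⟩⟩
    · exact Or.inr ⟨⟨h1.2, h1.1⟩, fun hx => h2 (G.symm hx)⟩
  loopless := fun a h => h.1 rfl
  edge_mem := by
    rintro a b ⟨hne, h⟩
    rcases h with ⟨h1, _⟩ | ⟨⟨ha, hb⟩, _⟩
    · exact G.edge_mem h1
    · exact ⟨(G.edge_mem ha).2, (G.edge_mem hb).2⟩

/-- Z measurement at `v`: delete the vertex `v` together with all incident edges. -/
def ZM (G : FGraph α) (v : α) : FGraph α where
  verts := G.verts \ {v}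
  Adj a b := G.Adj a b ∧ a ≠ v ∧ b ≠ v
  symm := fun h => ⟨G.symm h.1, h.2.2, h.2.1⟩
  loopless := fun a h => G.loopless a h.1
  edge_mem := by
    rintro a b ⟨h, ha, hb⟩
    exact ⟨⟨(G.edge_mem h).1, ha⟩, ⟨(G.edge_mem h).2, hb⟩⟩

/-- X measurement at `u` with chosen neighbour `w`:
`X_u(G) = LC_w(Z_u(LC_u(LC_w(G))))`. -/
def XM (G : FGraph α) (u w : α) : FGraph α :=
  ((((G.LC w).LC u).ZM u).LC w)

/-- Y measurement at `v`: `Y_v(G) = Z_v(LC_v(G))`. -/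
def YM (G : FGraph α) (v : α) : FGraph α :=
  (G.LC v).ZM v

/-- `G` is a star graph with centre `c`. -/
def IsStar (G : FGraph α) (c : α) : Prop :=
  c ∈ G.verts ∧
    ∀ a b, G.Adj a b ↔ (a ≠ b ∧ a ∈ G.verts ∧ b ∈ G.verts ∧ (a = c ∨ b = c))

/-- `G` is a complete graph on its vertex set. -/
def IsComplete (G : FGraph α) : Prop :=
  ∀ a b, G.Adj a b ↔ (a ≠ b ∧ a ∈ G.verts ∧ b ∈ G.verts)

/-- One step of local complementation or vertex deletion. -/
inductive Step : FGraph α → FGraph α → Prop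
  | lc (G : FGraph α) (v : α) : Step G (G.LC v)
  | del (G : FGraph α) (v : α) : Step G (G.ZM v)

/-- `H` is a vertex-minor of `G`: `H` is obtained from `G` by a finite sequence of
local complementations and vertex deletions. -/
def IsVertexMinor (H G : FGraph α) : Prop :=
  Relation.ReflTransGen Step G H

/-- One step of local complementation. -/
inductive LCStep : FGraph α → FGraph α → Prop
  | lc (G : FGraph α) (v : α) : LCStep G (G.LC v)

/-- `H` is obtained from `G` by a finite sequence of local complementations. -/
def LCReach (G H : FGraph α) : Prop :=
  Relation.ReflTransGen LCStep G H

end FGraph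

/-- The cycle graph on vertices `0, 1, …, l-1`, with `i` adjacent to `j`
iff `i - j ≡ ±1 (mod l)`. -/
def cycleGraph (l : ℕ) : FGraph ℕ where
  verts := {i | i < l}
  Adj a b := a < l ∧ b < l ∧ a ≠ b ∧ ((a + 1) % l = b ∨ (b + 1) % l = a)
  symm := fun h => ⟨h.2.1, h.1, h.2.2.1.symm, h.2.2.2.symm⟩
  loopless := fun a h => h.2.2.1 rfl
  edge_mem := fun h => ⟨h.1, h.2.1⟩

/-! Local complementation at `v` toggles exactly the edges between neighbours of `v`.
In `C_l`, complementing at `c_{l-1}` adds the chord `c_0 c_{l-2}`. Now `c_0` has the three neighbours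
`c_1, c_{l-2}, c_{l-1}`, so complementing at `c_0` toggles the triangle on them: the edge
`c_{l-2} c_{l-1}` disappears and `c_1 c_{l-2}`, `c_1 c_{l-1}` appear. Deleting `c_0` leaves `c_{l-1}`
as a leaf hanging at `c_1`, and complementing at a vertex of degree one changes nothing. -/

namespace FGraph

variable {α : Type*} {G : FGraph α} {v a b : α}

theorem ext {H₁ H₂ : FGraph α} (hV : H₁.verts = H₂.verts) (hAdj : ∀ a b, H₁.Adj a b ↔ H₂.Adj a b) :
    H₁ = H₂ := by
  cases H₁; cases H₂
  obtain rfl : _ = _ := funext₂ fun a b => propext (hAdj a b)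
  subst hV
  rfl

@[simp] theorem LC_verts : (G.LC v).verts = G.verts := rfl

theorem LC_adj : (G.LC v).Adj a b ↔ a ≠ b ∧ Xor (G.Adj a b) (G.Adj v a ∧ G.Adj v b) := Iff.rfl

@[simp] theorem ZM_verts : (G.ZM v).verts = G.verts \ {v} := rfl

theorem ZM_adj : (G.ZM v).Adj a b ↔ G.Adj a b ∧ a ≠ v ∧ b ≠ v := Iff.rfl

theorem LC_eq_self_of_subsingleton (hv : {a | G.Adj v a}.Subsingleton) : G.LC v = G := by
  refine ext rfl fun a b => ⟨fun h => ?_, fun h => ⟨fun hab => G.loopless a (hab ▸ h), ?_⟩⟩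
  · rcases h with ⟨hne, h | ⟨⟨ha, hb⟩, -⟩⟩
    · exact h.1
    · exact absurd (hv ha hb) hne
  · exact Or.inl ⟨h, fun ⟨ha, hb⟩ => G.loopless a (hv ha hb ▸ h)⟩

end FGraph

open FGraph

section cycle

variable {l x y : ℕ}

theorem cycleGraph_adj_iff :
    (cycleGraph l).Adj x y ↔ x < l ∧ y < l ∧ x ≠ y ∧
      (x + 1 = y ∨ y + 1 = x ∨ (x = 0 ∧ y = l - 1) ∨ (y = 0 ∧ x = l - 1)) := by
  have succ_mod_eq {z w : ℕ} (hz : z < l) :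
      (z + 1) % l = w ↔ z + 1 = w ∧ w < l ∨ z = l - 1 ∧ w = 0 := by
    rcases (Nat.succ_le_of_lt hz).lt_or_eq with h | h
    · rw [Nat.mod_eq_of_lt h]; omega
    · rw [← Nat.succ_eq_add_one, h, Nat.mod_self]; omega
  change _ ∧ _ ∧ _ ∧ (_ ∨ _) ↔ _
  constructor <;> rintro ⟨hx, hy, hne, h⟩ <;> simp only [succ_mod_eq hx, succ_mod_eq hy] at h ⊢ <;>
    omega

theorem cycleGraph_LC_last_adj_iff (hl : 4 ≤ l) :
    ((cycleGraph l).LC (l - 1)).Adj x y ↔ x < l ∧ y < l ∧ x ≠ y ∧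
      (x + 1 = y ∨ y + 1 = x ∨ (x = 0 ∧ y = l - 1) ∨ (y = 0 ∧ x = l - 1) ∨
        (x = 0 ∧ y = l - 2) ∨ (y = 0 ∧ x = l - 2)) := by
  have hnbr (z : ℕ) : (cycleGraph l).Adj (l - 1) z ↔ z = 0 ∨ z = l - 2 := by
    rw [cycleGraph_adj_iff]; omega
  rw [LC_adj, hnbr, hnbr, cycleGraph_adj_iff, Xor]
  grind

-- For `l = 4` the toggled pair `c_1 c_{l-2}` would be a cycle edge and get removed.
theorem cycleGraph_LC_last_LC_zero_adj_iff (hl : 5 ≤ l) :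
    (((cycleGraph l).LC (l - 1)).LC 0).Adj x y ↔ x < l ∧ y < l ∧ x ≠ y ∧
      ((x + 1 = y ∧ x ≠ l - 2) ∨ (y + 1 = x ∧ y ≠ l - 2) ∨
        (x = 0 ∧ y = l - 1) ∨ (y = 0 ∧ x = l - 1) ∨
        (x = 0 ∧ y = l - 2) ∨ (y = 0 ∧ x = l - 2) ∨
        (x = 1 ∧ (y = l - 1 ∨ y = l - 2)) ∨ (y = 1 ∧ (x = l - 1 ∨ x = l - 2))) := by
  have hnbr (z : ℕ) : ((cycleGraph l).LC (l - 1)).Adj 0 z ↔ z = 1 ∨ z = l - 1 ∨ z = l - 2 := by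
    rw [cycleGraph_LC_last_adj_iff (by omega)]; omega
  rw [LC_adj, hnbr, hnbr, cycleGraph_LC_last_adj_iff (by omega), Xor]
  grind (splits := 20)

theorem cycleGraph_LC_last_LC_zero_ZM_zero_adj_iff (hl : 5 ≤ l) :
    ((((cycleGraph l).LC (l - 1)).LC 0).ZM 0).Adj x y ↔
      (y = x + 1 ∧ 1 ≤ x ∧ x ≤ l - 3) ∨ (x = y + 1 ∧ 1 ≤ y ∧ y ≤ l - 3) ∨
        (x = 1 ∧ (y = l - 2 ∨ y = l - 1)) ∨ (y = 1 ∧ (x = l - 2 ∨ x = l - 1)) := by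
  rw [ZM_adj, cycleGraph_LC_last_LC_zero_adj_iff hl]
  omega

end cycle

/-- for `l ≥ 5`, the X measurement at `c₀` of the cycle `C_l`,
with chosen neighbour `c_{l-1}`, yields the cycle of length `l-2` on
`c₁, …, c_{l-2}` together with the pendant vertex `c_{l-1}` attached to `c₁`. -/
theorem xMeasurement_cycle (l : ℕ) (hl : 5 ≤ l) :
    ((cycleGraph l).XM 0 (l - 1)).verts = {i | 0 < i ∧ i < l} ∧
    ∀ a b, ((cycleGraph l).XM 0 (l - 1)).Adj a b ↔
      ((b = a + 1 ∧ 1 ≤ a ∧ a ≤ l - 3) ∨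
       (a = b + 1 ∧ 1 ≤ b ∧ b ≤ l - 3) ∨
       (a = 1 ∧ (b = l - 2 ∨ b = l - 1)) ∨
       (b = 1 ∧ (a = l - 2 ∨ a = l - 1))) := by
  have hleaf : {z | ((((cycleGraph l).LC (l - 1)).LC 0).ZM 0).Adj (l - 1) z}.Subsingleton := by
    intro a ha b hb
    have := (cycleGraph_LC_last_LC_zero_ZM_zero_adj_iff hl).1 ha
    have := (cycleGraph_LC_last_LC_zero_ZM_zero_adj_iff hl).1 hb
    omega
  rw [XM, LC_eq_self_of_subsingleton hleaf]
  refine ⟨?_, fun a b => cycleGraph_LC_last_LC_zero_ZM_zero_adj_iff hl⟩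
  ext i
  simp only [ZM_verts, LC_verts, cycleGraph, Set.mem_sdiff, Set.mem_singleton_iff,
    Set.mem_ofPred_eq]
  omega
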